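/- Let W_Δ(x,y) be the set of multisets of size Δ over {M,P,O,X} matching (M O^{d−1} | P^d) O^y X^x with d = Δ−x−y, and let B_Δ(x,y) be as above. If Δ = x + y + 2, then for every w ∈ W_Δ(x,y): either w contains a copy of M, in which case the multiset consisting of Δ copies of M is not in B_Δ(x,y); or w contains a copy of P, in which case the multiset consisting of Δ copies of P is not in B_Δ(x,y). -/

import Mathlib

inductive Lbl : Type
  | M | P | O | X
deriving DecidableEq

open Lbl

/-- The set of multisets of `k` symbols, each drawn from `S`. -/
def FromSet (S : Set Lbl) (k : ℕ) : Set (Multiset Lbl) :=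
  {m | Multiset.card m = k ∧ ∀ s ∈ m, s ∈ S}

/-- Concatenation of two pattern sets of multisets. -/
def concatP (A B : Set (Multiset Lbl)) : Set (Multiset Lbl) :=
  {m | ∃ a ∈ A, ∃ b ∈ B, m = a + b}

/-- `B_Δ(x,y)`: multisets matching `([MX][POX]^{d-1} | [OX]^d)[POX]^y[MPOX]^x`, `d = Δ-x-y`. -/
def Bset (Δ x y : ℕ) : Set (Multiset Lbl) :=
  concatP (concatP ((concatP (FromSet {M, X} 1) (FromSet {P, O, X} (Δ - x - y - 1))) ∪
      FromSet {O, X} (Δ - x - y)) (FromSet {P, O, X} y)) (FromSet Set.univ x)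

/-- `W_Δ(x,y)`: multisets matching `(M O^{d-1} | P^d) O^y X^x`, `d = Δ-x-y`. -/
def Wset (Δ x y : ℕ) : Set (Multiset Lbl) :=
  concatP (concatP ((concatP (FromSet {M} 1) (FromSet {O} (Δ - x - y - 1))) ∪
      FromSet {P} (Δ - x - y)) (FromSet {O} y)) (FromSet {X} x)

/-! Count letters: a word of `Bset Δ x y` takes its `M`s only from the single `[MX]` slot and the
`x` wildcard slots, so it has at most `x + 1 < Δ` of them; its `P`s come from at most
`(d - 1) + y + x = Δ - 1` slots. Hence neither constant word of length `Δ` lies in `Bset Δ x y`,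
while every word of `Wset Δ x y` contains an `M` or (as `d > 0`) a `P`. -/

section FromSet

variable {S : Set Lbl} {k : ℕ} {m : Multiset Lbl}

lemma count_le_of_mem_fromSet (h : m ∈ FromSet S k) (s : Lbl) : m.count s ≤ k :=
  h.1 ▸ m.count_le_card s

lemma count_eq_zero_of_mem_fromSet (h : m ∈ FromSet S k) {s : Lbl} (hs : s ∉ S) :
    m.count s = 0 :=
  Multiset.count_eq_zero.2 fun hm => hs (h.2 s hm)

lemma mem_of_mem_fromSet_singleton {s : Lbl} (h : m ∈ FromSet {s} k) (hk : 0 < k) : s ∈ m := by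
  obtain ⟨t, ht⟩ := Multiset.card_pos_iff_exists_mem.1 (h.1 ▸ hk)
  rwa [← Set.mem_singleton_iff.1 (h.2 t ht)]

end FromSet

lemma count_le_of_mem_concatP {A B : Set (Multiset Lbl)} {s : Lbl} {i j : ℕ}
    (hA : ∀ a ∈ A, a.count s ≤ i) (hB : ∀ b ∈ B, b.count s ≤ j) :
    ∀ m ∈ concatP A B, m.count s ≤ i + j := by
  rintro _ ⟨a, ha, b, hb, rfl⟩
  rw [Multiset.count_add]
  exact add_le_add (hA a ha) (hB b hb)

section

variable {Δ x y : ℕ}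

lemma count_M_le_of_mem_Bset {m : Multiset Lbl} (hm : m ∈ Bset Δ x y) :
    m.count M ≤ 1 + x := by
  refine count_le_of_mem_concatP
    (count_le_of_mem_concatP (j := 0) ?_
      fun b hb => (count_eq_zero_of_mem_fromSet hb (by simp)).le)
    (fun c hc => count_le_of_mem_fromSet hc M) m hm
  rintro a (ha | ha)
  · simpa using count_le_of_mem_concatP (fun a ha => count_le_of_mem_fromSet ha M)
      (fun b hb => (count_eq_zero_of_mem_fromSet hb (by simp)).le) a ha
  · exact (count_eq_zero_of_mem_fromSet ha (by simp)).le.trans (Nat.zero_le _)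

lemma count_P_le_of_mem_Bset {m : Multiset Lbl} (hm : m ∈ Bset Δ x y) :
    m.count P ≤ (Δ - x - y - 1) + y + x := by
  refine count_le_of_mem_concatP
    (count_le_of_mem_concatP ?_ fun b hb => count_le_of_mem_fromSet hb P)
    (fun c hc => count_le_of_mem_fromSet hc P) m hm
  rintro a (ha | ha)
  · simpa using count_le_of_mem_concatP
      (fun a ha => (count_eq_zero_of_mem_fromSet ha (s := P) (by simp)).le)
      (fun b hb => count_le_of_mem_fromSet hb P) a ha
  · exact (count_eq_zero_of_mem_fromSet ha (by simp)).le.trans (Nat.zero_le _)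

lemma replicate_M_notMem_Bset (h : x + 2 ≤ Δ) : Multiset.replicate Δ M ∉ Bset Δ x y := by
  intro hm
  have := count_M_le_of_mem_Bset hm
  rw [Multiset.count_replicate_self] at this
  omega

lemma replicate_P_notMem_Bset (h : x + y < Δ) : Multiset.replicate Δ P ∉ Bset Δ x y := by
  intro hm
  have := count_P_le_of_mem_Bset hm
  rw [Multiset.count_replicate_self] at this
  omega

lemma M_mem_or_P_mem_of_mem_Wset (h : x + y < Δ) {w : Multiset Lbl} (hw : w ∈ Wset Δ x y) :
    M ∈ w ∨ P ∈ w := by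
  obtain ⟨_, ⟨a, ha, b, -, rfl⟩, c, -, rfl⟩ := hw
  rcases ha with ⟨a₁, ha₁, a₂, -, rfl⟩ | ha
  · exact .inl (by simp [mem_of_mem_fromSet_singleton ha₁ one_pos])
  · exact .inr (by simp [mem_of_mem_fromSet_singleton ha (by omega)])

end

theorem stmt_4 (Δ x y : ℕ) (hΔ : Δ = x + y + 2) :
    ∀ w ∈ Wset Δ x y,
      (Lbl.M ∈ w ∧ Multiset.replicate Δ Lbl.M ∉ Bset Δ x y) ∨
      (Lbl.P ∈ w ∧ Multiset.replicate Δ Lbl.P ∉ Bset Δ x y) := by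
  intro w hw
  rcases M_mem_or_P_mem_of_mem_Wset (by omega) hw with hM | hP
  · exact .inl ⟨hM, replicate_M_notMem_Bset (by omega)⟩
  · exact .inr ⟨hP, replicate_P_notMem_Bset (by omega)⟩
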